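/- For any finite digraph D, the maximum number τ(D) of pairwise arc-disjoint arborescences of D satisfies τ(D) ≤ λ(D), where λ(D) is the largest integer λ such that for all 0 ≤ ℓ ≤ λ, ∑_{i=0}^{ℓ-1} (ℓ - i)·|{v : d^in(v) = i}| ≤ ℓ. -/

import Mathlib

open Finset

variable {V : Type*} [Fintype V] [DecidableEq V]

/-- In-degree of a vertex in a digraph given by its arc set. -/
def inDegD (A : Finset (V × V)) (v : V) : ℕ := (A.filter fun e => e.2 = v).card

/-- Out-degree of a vertex. -/
def outDegD (A : Finset (V × V)) (v : V) : ℕ := (A.filter fun e => e.1 = v).card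

/-- Number of vertices of in-degree exactly `i`. -/
def Yk (A : Finset (V × V)) (i : ℕ) : ℕ := (univ.filter fun v => inDegD A v = i).card

/-- `λ(D)`: the largest `l` such that for all `k ≤ l`,
`∑_{i<k} (k-i)·Y_i ≤ k`. -/
noncomputable def lambdaD (A : Finset (V × V)) : ℕ :=
  sSup {l : ℕ | ∀ k ≤ l, ∑ i ∈ range k, (k - i) * Yk A i ≤ k}

/-- Minimum in-degree. -/
noncomputable def minInDegD (A : Finset (V × V)) : ℕ :=
  sInf {d : ℕ | ∃ v : V, inDegD A v = d}

/-- Minimum out-degree. -/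
noncomputable def minOutDegD (A : Finset (V × V)) : ℕ :=
  sInf {d : ℕ | ∃ v : V, outDegD A v = d}

/-- `B` is an arborescence of the digraph with arc set `A`: a spanning
sub-digraph with a root of in-degree 0, all other vertices of in-degree 1,
and every vertex reachable from the root (equivalently, the underlying
graph is a tree with all arcs pointing away from the root). -/
def IsArborescence (A B : Finset (V × V)) : Prop :=
  B ⊆ A ∧ ∃ r : V, inDegD B r = 0 ∧ (∀ v, v ≠ r → inDegD B v = 1) ∧
    ∀ v : V, Relation.ReflTransGen (fun x y => (x, y) ∈ B) r v

/-- `τ(D)`: the maximum number of pairwise arc-disjoint arborescences. -/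
noncomputable def tauD (A : Finset (V × V)) : ℕ :=
  sSup {k : ℕ | ∃ T : Fin k → Finset (V × V),
    (∀ i, IsArborescence A (T i)) ∧ ∀ i j, i ≠ j → Disjoint (T i) (T j)}

/-!
Let `T₁, …, T_k` be arc-disjoint arborescences with roots `r₁, …, r_k`. A vertex `v` receives
an arc from every `T_j` with `r_j ≠ v`, so `k - d⁻(v) ≤ #{j | r_j = v}`, and summing over `v`
gives `∑_v (k - d⁻(v)) ≤ k`. Grouping the vertices by in-degree, the left side is
`∑_{i<k} (k - i)·Y_i`; since a packing of size `k` yields packings of every size `ℓ ≤ k`, the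
defining inequality of `λ(D)` holds for all `ℓ ≤ τ(D)`.
-/

section Counting

variable {α : Type*} [Fintype α]

theorem sum_range_sub_mul_card_fiber [DecidableEq α] (f : α → ℕ) (l : ℕ) :
    ∑ i ∈ range l, (l - i) * #{a | f a = i} = ∑ a, (l - f a) := by
  calc ∑ i ∈ range l, (l - i) * #{a | f a = i}
      = ∑ i ∈ range l, ∑ a, if f a = i then l - i else 0 := by
        simp only [card_filter, mul_sum, mul_ite, mul_one, mul_zero]
    _ = ∑ a, ∑ i ∈ range l, if f a = i then l - i else 0 := sum_comm
    _ = ∑ a, (l - f a) := by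
        refine sum_congr rfl fun a _ => ?_
        simp only [sum_ite_eq, mem_range]
        split_ifs <;> omega

theorem card_le_one_of_forall_sum_sub_le (f : α → ℕ) (hf : ∀ l, ∑ a, (l - f a) ≤ l) :
    Fintype.card α ≤ 1 := by
  set s := ∑ a, f a
  have hle : ∀ a, f a ≤ s + 1 := fun a =>
    (single_le_sum (fun _ _ => Nat.zero_le _) (mem_univ a)).trans (Nat.le_succ s)
  have hcard : Fintype.card α * (s + 1) = ∑ a, (s + 1 - f a) + s := by
    rw [← sum_add_distrib, ← card_univ, ← smul_eq_mul, ← sum_const]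
    exact sum_congr rfl fun a _ => (Nat.sub_add_cancel (hle a)).symm
  have := hf (s + 1)
  nlinarith

end Counting

section Arborescences

variable {V : Type*} [DecidableEq V]

theorem sum_range_sub_mul_Yk [Fintype V] (A : Finset (V × V)) (l : ℕ) :
    ∑ i ∈ range l, (l - i) * Yk A i = ∑ v, (l - inDegD A v) :=
  sum_range_sub_mul_card_fiber (inDegD A) l

theorem sum_inDegD_le_of_pairwise_disjoint {ι : Type*} [Fintype ι] {A : Finset (V × V)}
    {T : ι → Finset (V × V)} (hTA : ∀ j, T j ⊆ A)
    (hT : Pairwise fun i j => Disjoint (T i) (T j)) (v : V) :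
    ∑ j, inDegD (T j) v ≤ inDegD A v := by
  unfold inDegD
  rw [← card_biUnion fun i _ j _ hij => disjoint_filter_filter (hT hij)]
  exact card_le_card <| biUnion_subset.mpr fun j _ => filter_subset_filter _ (hTA j)

theorem inDegD_eq_ite_of_root {B : Finset (V × V)} {r : V}
    (hr0 : inDegD B r = 0) (hr1 : ∀ v, v ≠ r → inDegD B v = 1) (v : V) :
    inDegD B v = if r = v then 0 else 1 := by
  split_ifs with h
  · exact h ▸ hr0
  · exact hr1 v (Ne.symm h)

theorem sum_sub_inDegD_le_of_arborescences [Fintype V] {ι : Type*} [Fintype ι]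
    {A : Finset (V × V)} {T : ι → Finset (V × V)} (hT : ∀ j, IsArborescence A (T j))
    (hdisj : Pairwise fun i j => Disjoint (T i) (T j)) :
    ∑ v, (Fintype.card ι - inDegD A v) ≤ Fintype.card ι := by
  choose r hr0 hr1 _ using fun j => (hT j).2
  have hroots (v : V) : Fintype.card ι - inDegD A v ≤ #{j | r j = v} := by
    have hin : #{j | ¬ r j = v} ≤ inDegD A v := calc
      #{j | ¬ r j = v} = ∑ j, inDegD (T j) v := by
        simp only [card_filter, inDegD_eq_ite_of_root (hr0 _) (hr1 _), ite_not]
      _ ≤ inDegD A v := sum_inDegD_le_of_pairwise_disjoint (fun j => (hT j).1) hdisj v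
    have := card_filter_add_card_filter_not (s := univ) fun j => r j = v
    rw [card_univ] at this
    omega
  calc ∑ v, (Fintype.card ι - inDegD A v)
      ≤ ∑ v, #{j | r j = v} := sum_le_sum fun v _ => hroots v
    _ = Fintype.card ι := (card_eq_sum_card_fiberwise fun j _ => mem_univ (r j)).symm

def HasArborescencePacking (A : Finset (V × V)) (k : ℕ) : Prop :=
  ∃ T : Fin k → Finset (V × V),
    (∀ i, IsArborescence A (T i)) ∧ ∀ i j, i ≠ j → Disjoint (T i) (T j)

namespace HasArborescencePacking

variable {A : Finset (V × V)}

theorem zero (A : Finset (V × V)) : HasArborescencePacking A 0 :=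
  ⟨Fin.elim0, fun i => i.elim0, fun i => i.elim0⟩

theorem mono {k m : ℕ} (h : HasArborescencePacking A k) (hmk : m ≤ k) :
    HasArborescencePacking A m := by
  obtain ⟨T, hT, hdisj⟩ := h
  exact ⟨fun i => T (Fin.castLE hmk i), fun i => hT _,
    fun i j hij => hdisj _ _ ((Fin.castLE_injective hmk).ne hij)⟩

theorem sum_sub_inDegD_le [Fintype V] {k : ℕ} (h : HasArborescencePacking A k) :
    ∑ v, (k - inDegD A v) ≤ k := by
  obtain ⟨T, hT, hdisj⟩ := h
  simpa using sum_sub_inDegD_le_of_arborescences hT fun i j => hdisj i j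

theorem nonempty {k : ℕ} (h : HasArborescencePacking A k) (hk : 0 < k) : Nonempty V := by
  obtain ⟨T, hT, -⟩ := h
  obtain ⟨r, -⟩ := (hT ⟨0, hk⟩).2
  exact ⟨r⟩

theorem of_subsingleton [Subsingleton V] (r : V) (k : ℕ) : HasArborescencePacking A k := by
  refine ⟨fun _ => ∅, fun _ => ⟨empty_subset A, r, by simp [inDegD], ?_, ?_⟩,
    fun _ _ _ => disjoint_empty_left ∅⟩
  · exact fun v hv => absurd (Subsingleton.elim v r) hv
  · exact fun v => Subsingleton.elim r v ▸ Relation.ReflTransGen.refl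

end HasArborescencePacking

end Arborescences

theorem stmt3_general {V : Type*} [Fintype V] [DecidableEq V]
    (A : Finset (V × V)) :
    tauD A ≤ lambdaD A := by
  set L := {l : ℕ | ∀ k ≤ l, ∑ i ∈ range k, (k - i) * Yk A i ≤ k}
  change sSup {k | HasArborescencePacking A k} ≤ sSup L
  set S := {k | HasArborescencePacking A k}
  rcases Nat.eq_zero_or_pos (sSup S) with h0 | hpos
  · exact h0 ▸ Nat.zero_le _
  have hS : BddAbove S := by
    by_contra h
    exact hpos.ne' (Nat.sSup_of_not_bddAbove h)
  have htau : HasArborescencePacking A (sSup S) := Nat.sSup_mem ⟨0, .zero A⟩ hS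
  have htauL : sSup S ∈ L := fun k hk =>
    (sum_range_sub_mul_Yk A k).symm ▸ (htau.mono hk).sum_sub_inDegD_le
  by_cases hL : BddAbove L
  · exact le_csSup hL htauL
  -- Otherwise `V` is a single vertex, which carries packings of every size: then `S` is
  -- unbounded and `tauD A` is the junk value `0`, contradicting `hpos`.
  have hsub : Subsingleton V := by
    refine Fintype.card_le_one_iff_subsingleton.mp <|
      card_le_one_of_forall_sum_sub_le (inDegD A) fun l => ?_
    obtain ⟨m, hm, hlm⟩ := not_bddAbove_iff.mp hL l
    exact sum_range_sub_mul_Yk A l ▸ hm l hlm.le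
  obtain ⟨r⟩ := htau.nonempty hpos
  obtain ⟨b, hb⟩ := hS
  exact absurd (hb (HasArborescencePacking.of_subsingleton r (b + 1))) (by omega)

theorem stmt3 {V : Type*} [Fintype V] [DecidableEq V]
    (A : Finset (V × V)) (hloop : ∀ e ∈ A, e.1 ≠ e.2) :
    tauD A ≤ lambdaD A :=
  stmt3_general A
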